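/- Let μ be a finite Borel measure on ℝⁿ, A ⊂ ℝⁿ a bounded set, 0 < R < ∞, and for each x ∈ A let r_x satisfy R ≤ r_x ≤ 2R. For any θ in the unit sphere S^{n-1}, there exists a finite set F ⊂ A such that the closed balls {B(x, r_x)}_{x ∈ F} are pairwise disjoint and ∑_{x ∈ F} μ(B(x, r_x) \ H(x,θ)) ≥ c·μ(A), where c = c(n) > 0 depends only on n. -/

import Mathlib

/-!
Cut space into cubes of side `R / n`, so that each cube has diameter at most `R`. In every cube `Q`
meeting `A` pick a point `x ∈ A ∩ Q` at which `⟪·, θ⟫` is almost maximal: as `r x ≥ R ≥ diam Q`,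
the set `B(x, r x) \ H(x, θ)` then contains all of `A ∩ Q` but a set of measure less than
`μ (A ∩ Q) / 2`. Colour the cubes by their integer coordinates modulo `4n + 2`. Distinct cubes of
one colour are more than `4R` apart, so the balls of radius at most `2R` around their chosen points
are disjoint, and by pigeonhole one of the `(4n + 2)ⁿ` colours carries a `(4n + 2)⁻ⁿ` fraction of
the total.
-/

open Set MeasureTheory Metric Filter Topology
open scoped ENNReal RealInnerProductSpace

/-- Unlike `Finset.exists_le_sum_fiber_of_nsmul_le_sum`, this needs no cancellation, so it applies
to `ℝ≥0∞`. -/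
theorem Finset.exists_sum_le_card_nsmul_sum_fiber {α β M : Type*} [Fintype β] [Nonempty β]
    [DecidableEq β] [AddCommMonoid M] [LinearOrder M] [IsOrderedAddMonoid M]
    (s : Finset α) (f : α → β) (w : α → M) :
    ∃ b, ∑ a ∈ s, w a ≤ Fintype.card β • ∑ a ∈ s with f a = b, w a := by
  obtain ⟨b, -, hb⟩ := Finset.univ.exists_max_image (fun b => ∑ a ∈ s with f a = b, w a)
    Finset.univ_nonempty
  refine ⟨b, ?_⟩
  rw [← Finset.sum_fiberwise s f w]
  exact Finset.sum_le_card_nsmul _ _ _ fun c _ => hb c (Finset.mem_univ c)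

theorem exists_mem_measure_inter_superlevel_lt {X : Type*} [MeasurableSpace X]
    (μ : Measure X) [IsFiniteMeasure μ] {g : X → ℝ} (hg : Measurable g) {s : Set X}
    (hs : s.Nonempty) (hbdd : BddAbove (g '' s)) {ε : ℝ≥0∞} (hε : 0 < ε) :
    ∃ x ∈ s, μ (s ∩ {y | g x < g y}) < ε := by
  set M := sSup (g '' s)
  have hle : ∀ y ∈ s, g y ≤ M := fun y hy => le_csSup hbdd ⟨y, hy, rfl⟩
  by_cases hmax : ∃ x ∈ s, g x = M
  · obtain ⟨x, hx, hxM⟩ := hmax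
    refine ⟨x, hx, ?_⟩
    have : s ∩ {y | g x < g y} = ∅ := by
      ext y; simpa [hxM] using hle y
    simpa [this] using hε
  push Not at hmax
  have hlim : Tendsto (fun δ => μ (g ⁻¹' Ioo (M - δ) M)) (𝓝[>] 0) (𝓝 0) := by
    have := tendsto_measure_biInter_gt (μ := μ) (a := (0 : ℝ))
      (s := fun δ => g ⁻¹' Ioo (M - δ) M)
      (fun δ _ => (hg measurableSet_Ioo).nullMeasurableSet)
      (fun δ δ' _ hδ => preimage_mono (Ioo_subset_Ioo_left (by linarith)))
      ⟨1, one_pos, measure_ne_top μ _⟩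
    have hempty : ⋂ δ > (0 : ℝ), g ⁻¹' Ioo (M - δ) M = ∅ := by
      refine eq_empty_of_forall_notMem fun y hy => ?_
      simp only [mem_iInter, mem_preimage, mem_Ioo] at hy
      have := (hy (M - g y) (sub_pos.2 (hy 1 one_pos).2)).1
      simp at this
    rwa [hempty, measure_empty] at this
  obtain ⟨δ, hδε, hδ⟩ := ((hlim.eventually_lt_const hε).and self_mem_nhdsWithin).exists
  obtain ⟨_, ⟨x, hx, rfl⟩, hxδ⟩ := exists_lt_of_lt_csSup (hs.image g) (sub_lt_self M hδ)
  refine ⟨x, hx, lt_of_le_of_lt (measure_mono ?_) hδε⟩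
  rintro y ⟨hy, hxy⟩
  exact ⟨hxδ.trans hxy, (hle y hy).lt_of_ne (hmax y hy)⟩

theorem exists_mem_measure_le_two_mul_measure_inter_sublevel {X : Type*} [MeasurableSpace X]
    (μ : Measure X) [IsFiniteMeasure μ] {g : X → ℝ} (hg : Measurable g) {s : Set X}
    (hs : s.Nonempty) (hbdd : BddAbove (g '' s)) :
    ∃ x ∈ s, μ s ≤ 2 * μ (s ∩ {y | g y ≤ g x}) := by
  rcases eq_or_ne (μ s) 0 with h0 | h0
  · obtain ⟨x, hx⟩ := hs
    exact ⟨x, hx, by simp [h0]⟩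
  obtain ⟨x, hx, hsmall⟩ := exists_mem_measure_inter_superlevel_lt μ hg hs hbdd
    (ENNReal.half_pos h0)
  refine ⟨x, hx, ?_⟩
  have hsplit : μ s ≤ μ (s ∩ {y | g y ≤ g x}) + μ (s ∩ {y | g x < g y}) := by
    refine (measure_mono fun y hy => ?_).trans (measure_union_le _ _)
    rcases le_or_gt (g y) (g x) with h | h
    exacts [Or.inl ⟨hy, h⟩, Or.inr ⟨hy, h⟩]
  have hhalf : μ s / 2 ≤ μ (s ∩ {y | g y ≤ g x}) := by
    have hfin : μ s / 2 ≠ ∞ := ENNReal.div_ne_top (measure_ne_top μ s) two_ne_zero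
    rw [← ENNReal.add_le_add_iff_right hfin, ENNReal.add_halves]
    exact hsplit.trans (add_le_add_right hsmall.le _)
  rwa [ENNReal.div_le_iff two_ne_zero ENNReal.ofNat_ne_top, mul_comm] at hhalf

theorem exists_mem_measure_le_two_mul_measure_closedBall_diff_halfSpace
    {E : Type*} [NormedAddCommGroup E] [InnerProductSpace ℝ E] [MeasurableSpace E]
    [OpensMeasurableSpace E] (μ : Measure E) [IsFiniteMeasure μ] {s : Set E}
    (hs : s.Nonempty) (hsb : Bornology.IsBounded s) (r : E → ℝ)
    (hr : ∀ x ∈ s, ∀ y ∈ s, dist y x ≤ r x) (θ : E) :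
    ∃ x ∈ s, μ s ≤ 2 * μ (closedBall x (r x) \ {y | 0 < ⟪y - x, θ⟫}) := by
  obtain ⟨x, hx, hμ⟩ := exists_mem_measure_le_two_mul_measure_inter_sublevel μ
    (innerSL ℝ θ).continuous.measurable hs ((innerSL ℝ θ).lipschitz.isBounded_image hsb).bddAbove
  refine ⟨x, hx, hμ.trans ?_⟩
  gcongr
  rintro y ⟨hy, hyx⟩
  refine ⟨mem_closedBall.2 (hr x hx y hy), ?_⟩
  simp only [innerSL_apply_apply, mem_ofPred_eq, not_lt, inner_sub_left] at hyx ⊢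
  rw [real_inner_comm θ y, real_inner_comm θ x]
  linarith

theorem Int.abs_floor_sub_floor_sub_one_lt {K : Type*} [Field K] [LinearOrder K]
    [IsStrictOrderedRing K] [FloorRing K] (a b : K) :
    (|⌊a⌋ - ⌊b⌋| : K) - 1 < |a - b| := by
  have := Int.floor_le a
  have := Int.floor_le b
  have := Int.lt_floor_add_one a
  have := Int.lt_floor_add_one b
  rcases abs_cases ((⌊a⌋ : K) - ⌊b⌋) with ⟨h, -⟩ | ⟨h, -⟩ <;> rw [h, lt_abs] <;>
    [left; right] <;> linarith

section Cubes

variable {ι : Type*} [Fintype ι]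

noncomputable def cubeIndex (l : ℝ) (x : EuclideanSpace ℝ ι) : ι → ℤ := fun i => ⌊x i / l⌋

theorem dist_le_card_mul_of_cubeIndex_eq {l : ℝ} (hl : 0 < l) {x y : EuclideanSpace ℝ ι}
    (h : cubeIndex l x = cubeIndex l y) : dist x y ≤ Fintype.card ι * l := by
  have hcoord : ∀ i, dist (x i) (y i) ≤ l := fun i => by
    have := Int.abs_sub_lt_one_of_floor_eq_floor (congrFun h i)
    rw [← sub_div, abs_div, abs_of_pos hl, div_lt_one hl] at this
    rw [Real.dist_eq]; exact this.le
  have hcard : (Fintype.card ι : ℝ) ≤ (Fintype.card ι : ℝ) ^ 2 := by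
    exact_mod_cast Nat.le_self_pow two_ne_zero _
  rw [EuclideanSpace.dist_eq, Real.sqrt_le_left (by positivity)]
  calc ∑ i, dist (x i) (y i) ^ 2 ≤ ∑ _i : ι, l ^ 2 :=
        Finset.sum_le_sum fun i _ => pow_le_pow_left₀ dist_nonneg (hcoord i) 2
    _ = Fintype.card ι * l ^ 2 := by simp
    _ ≤ (Fintype.card ι * l) ^ 2 := by
        rw [mul_pow]; exact mul_le_mul_of_nonneg_right hcard (sq_nonneg l)

theorem sub_one_mul_lt_dist_of_cubeIndex_ne {l : ℝ} (hl : 0 < l) {m : ℕ}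
    {x y : EuclideanSpace ℝ ι} (hne : cubeIndex l x ≠ cubeIndex l y)
    (hmod : ∀ i, (cubeIndex l x i : ZMod m) = cubeIndex l y i) :
    (m - 1) * l < dist x y := by
  obtain ⟨i, hi⟩ := Function.ne_iff.1 hne
  have hm : (m : ℤ) ≤ |cubeIndex l x i - cubeIndex l y i| :=
    Int.le_of_dvd (abs_pos.2 (sub_ne_zero.2 hi))
      ((dvd_abs _ _).2 ((ZMod.intCast_eq_intCast_iff_dvd_sub _ _ _).1 (hmod i).symm))
  calc (m - 1) * l ≤ ((|cubeIndex l x i - cubeIndex l y i| : ℤ) - 1) * l := by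
        gcongr; exact_mod_cast hm
    _ < |x i / l - y i / l| * l := by
        gcongr; exact_mod_cast Int.abs_floor_sub_floor_sub_one_lt (x i / l) (y i / l)
    _ = dist (x i) (y i) := by
        rw [← sub_div, abs_div, abs_of_pos hl, div_mul_cancel₀ _ hl.ne', Real.dist_eq]
    _ ≤ dist x y := PiLp.dist_apply_le x y i

theorem finite_image_cubeIndex {l : ℝ} (hl : 0 < l) {A : Set (EuclideanSpace ℝ ι)}
    (hA : Bornology.IsBounded A) : (cubeIndex l '' A).Finite := by
  classical
  obtain ⟨ρ, hρ⟩ := hA.subset_closedBall 0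
  refine (Set.finite_Icc (fun _ => ⌊-ρ / l⌋) (fun _ => ⌊ρ / l⌋)).subset ?_
  rintro _ ⟨x, hx, rfl⟩
  have hxi : ∀ i, |x i| ≤ ρ := fun i =>
    (PiLp.norm_apply_le x i).trans (by simpa using hρ hx)
  exact ⟨fun i => Int.floor_mono (div_le_div_of_nonneg_right (neg_le_of_abs_le (hxi i)) hl.le),
    fun i => Int.floor_mono (div_le_div_of_nonneg_right (le_of_abs_le (hxi i)) hl.le)⟩

theorem exists_finset_pairwise_dist_gt_measure_le_sum [Nonempty ι]
    (μ : Measure (EuclideanSpace ℝ ι)) {A : Set (EuclideanSpace ℝ ι)}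
    (hA : Bornology.IsBounded A) {R : ℝ} (hR : 0 < R) (k : ℕ)
    (w : EuclideanSpace ℝ ι → ℝ≥0∞)
    (hw : ∀ s ⊆ A, s.Nonempty → (∀ x ∈ s, ∀ y ∈ s, dist x y ≤ R) → ∃ x ∈ s, μ s ≤ w x) :
    ∃ F : Finset (EuclideanSpace ℝ ι), ↑F ⊆ A ∧
      (F : Set (EuclideanSpace ℝ ι)).Pairwise (fun x y => k * R < dist x y) ∧
      μ A ≤ (k * Fintype.card ι + 2) ^ Fintype.card ι * ∑ x ∈ F, w x := by
  classical
  set d := Fintype.card ι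
  have hd : (0 : ℝ) < d := by exact_mod_cast Fintype.card_pos
  set l := R / d
  have hl : 0 < l := div_pos hR hd
  set m := k * d + 2
  have : NeZero m := ⟨by omega⟩
  set T := (finite_image_cubeIndex hl hA).toFinset
  have hcell : ∀ Q ∈ T, ∃ x ∈ A ∩ cubeIndex l ⁻¹' {Q}, μ (A ∩ cubeIndex l ⁻¹' {Q}) ≤ w x := by
    intro Q hQ
    obtain ⟨a, ha, rfl⟩ := (Set.Finite.mem_toFinset _).1 hQ
    refine hw _ inter_subset_left ⟨a, ha, rfl⟩ fun x hx y hy => ?_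
    calc dist x y ≤ d * l := dist_le_card_mul_of_cubeIndex_eq hl (hx.2.trans hy.2.symm)
      _ = R := mul_div_cancel₀ _ hd.ne'
  choose! p hpA hpw using hcell
  have hpQ : ∀ Q ∈ T, cubeIndex l (p Q) = Q := fun Q hQ => (hpA Q hQ).2
  obtain ⟨c, hc⟩ := Finset.exists_sum_le_card_nsmul_sum_fiber T
    (fun Q i => (Q i : ZMod m)) (fun Q => w (p Q))
  set S := T.filter fun Q => (fun i => (Q i : ZMod m)) = c
  have hinj : Set.InjOn p S := fun Q hQ Q' hQ' h => by
    rw [← hpQ Q (Finset.mem_filter.1 hQ).1, h, hpQ Q' (Finset.mem_filter.1 hQ').1]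
  refine ⟨S.image p, ?_, ?_, ?_⟩
  · rw [Finset.coe_image]
    rintro _ ⟨Q, hQ, rfl⟩
    exact (hpA Q (Finset.mem_filter.1 hQ).1).1
  · have hsep : (k : ℝ) * R < (m - 1) * l := by
      have : ((m : ℝ) - 1) * l = k * R + l := by
        simp only [m, l]; push_cast; field_simp; ring
      linarith
    rw [Finset.coe_image]
    rintro _ ⟨Q, hQ, rfl⟩ _ ⟨Q', hQ', rfl⟩ hne
    obtain ⟨hQT, hQc⟩ := Finset.mem_filter.1 hQ
    obtain ⟨hQT', hQc'⟩ := Finset.mem_filter.1 hQ'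
    refine hsep.trans (sub_one_mul_lt_dist_of_cubeIndex_ne hl ?_ fun i => ?_) <;>
      rw [hpQ Q hQT, hpQ Q' hQT']
    · exact fun h => hne (congrArg p h)
    · exact congrFun (hQc.trans hQc'.symm) i
  · calc μ A ≤ ∑ Q ∈ T, μ (A ∩ cubeIndex l ⁻¹' {Q}) := by
          refine (measure_mono fun x hx => ?_).trans (measure_biUnion_finset_le T _)
          exact mem_biUnion ((Set.Finite.mem_toFinset _).2 ⟨x, hx, rfl⟩) ⟨hx, rfl⟩
      _ ≤ ∑ Q ∈ T, w (p Q) := Finset.sum_le_sum hpw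
      _ ≤ Fintype.card (ι → ZMod m) • ∑ Q ∈ S, w (p Q) := hc
      _ = (k * d + 2) ^ d * ∑ x ∈ S.image p, w x := by
          rw [Finset.sum_image hinj, nsmul_eq_mul, Fintype.card_fun, ZMod.card]
          simp [m, d]

end Cubes

theorem stmt_2 (n : ℕ) :
    ∃ c : ℝ≥0∞, 0 < c ∧
      ∀ (μ : Measure (EuclideanSpace ℝ (Fin n))) (_ : IsFiniteMeasure μ)
        (A : Set (EuclideanSpace ℝ (Fin n))) (_ : Bornology.IsBounded A)
        (R : ℝ) (_ : 0 < R)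
        (r : EuclideanSpace ℝ (Fin n) → ℝ)
        (_ : ∀ x ∈ A, R ≤ r x ∧ r x ≤ 2 * R)
        (θ : EuclideanSpace ℝ (Fin n)) (_ : ‖θ‖ = 1),
        ∃ F : Finset (EuclideanSpace ℝ (Fin n)), ↑F ⊆ A ∧
          (F : Set (EuclideanSpace ℝ (Fin n))).PairwiseDisjoint
            (fun x => closedBall x (r x)) ∧
          c * μ A ≤ ∑ x ∈ F, μ (closedBall x (r x) \ {y | 0 < ⟪y - x, θ⟫}) := by
  refine ⟨(2 * (4 * n + 2) ^ n)⁻¹, ENNReal.inv_pos.2 (by finiteness), ?_⟩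
  intro μ _ A hA R hR r hr θ hθ
  have : Nonempty (Fin n) := by
    rcases isEmpty_or_nonempty (Fin n) with h | h
    · simp [Subsingleton.elim θ 0] at hθ
    · exact h
  obtain ⟨F, hFA, hFsep, hμA⟩ := exists_finset_pairwise_dist_gt_measure_le_sum μ hA hR 4
    (fun x => 2 * μ (closedBall x (r x) \ {y | 0 < ⟪y - x, θ⟫}))
    fun s hsA hs hdiam => exists_mem_measure_le_two_mul_measure_closedBall_diff_halfSpace μ hs
      (hA.subset hsA) r (fun x hx y hy => (hdiam y hy x hx).trans (hr x (hsA hx)).1) θ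
  refine ⟨F, hFA, fun x hx y hy hxy => closedBall_disjoint_closedBall ?_, ?_⟩
  · have := hFsep hx hy hxy
    push_cast at this
    linarith [(hr x (hFA hx)).2, (hr y (hFA hy)).2]
  · rw [← Finset.mul_sum, Fintype.card_fin] at hμA
    rw [ENNReal.inv_mul_le_iff (by positivity) (by finiteness)]
    convert hμA using 1
    push_cast
    ring
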